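/- arXiv:1506.00844 — 3 statements merged into one kernel-verified Lean document; each statement's English description precedes it below -/
import Mathlib

section
/- For every real a > 0 and real m > 0, the function θ ↦ −(1+a)^{−m} cos(θ) · F₁(1/2; 1/2 − m, m; 3/2; cos²(θ), cos²(θ)/(1+a)) is an antiderivative of θ ↦ (1 + a/sin²(θ))^{−m} on the open interval (0, π/2). -/
open Real Filter Topology
set_option maxHeartbeats 1000000


noncomputable def binT (β x : ℝ) (n : ℕ) : ℝ := (ascPochhammer ℝ n).eval β * x ^ n / n.factorial

lemma binT_zero (β x : ℝ) : binT β x 0 = 1 := by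
  simp [binT]

lemma binT_succ (β x : ℝ) (n : ℕ) :
    binT β x (n + 1) = binT β x n * ((β + n) * x / (n + 1)) := by
  have h1 : ((n + 1).factorial : ℝ) = (n + 1) * n.factorial := by
    rw [Nat.factorial_succ]; push_cast; ring
  have h2 : (n.factorial : ℝ) ≠ 0 := Nat.cast_ne_zero.mpr (Nat.factorial_ne_zero n)
  have h3 : ((n : ℝ) + 1) ≠ 0 := by positivity
  simp only [binT]; rw [ascPochhammer_succ_eval, h1]
  field_simp
  ring

/-- ratio test helper -/
lemma summable_of_ratio_tendsto {f : ℕ → ℝ} {q : ℕ → ℝ} {L : ℝ} (hL : 0 ≤ L) (hL1 : L < 1)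
    (hrec : ∀ᶠ n in atTop, ‖f (n + 1)‖ = q n * ‖f n‖)
    (hq : Tendsto q atTop (𝓝 L)) : Summable f := by
  set l : ℝ := (1 + L) / 2 with hl
  have hl1 : l < 1 := by rw [hl]; linarith
  have hLl : L < l := by rw [hl]; linarith
  have hev : ∀ᶠ n in atTop, q n < l := hq.eventually_lt_const hLl
  refine summable_of_ratio_norm_eventually_le hl1 ?_
  filter_upwards [hrec, hev] with n h1 h2
  rw [h1]
  exact mul_le_mul_of_nonneg_right h2.le (norm_nonneg _)

lemma tendsto_abs_ratio (β : ℝ) :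
    Tendsto (fun n : ℕ => |β + n| / (n + 1)) atTop (𝓝 1) := by
  have h0 : Tendsto (fun n : ℕ => 1 + (β - 1) * (1 / (n + 1 : ℝ))) atTop (𝓝 1) := by
    have := tendsto_one_div_add_atTop_nhds_zero_nat (𝕜 := ℝ)
    have h := this.const_mul (β - 1)
    simpa using tendsto_const_nhds.add h
  refine h0.congr' ?_
  filter_upwards [tendsto_natCast_atTop_atTop.eventually (eventually_ge_atTop (-β))] with n hn
  have hβn : (0:ℝ) ≤ β + n := by linarith
  have hn1 : ((n:ℝ) + 1) ≠ 0 := by positivity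
  rw [abs_of_nonneg hβn]
  field_simp
  ring

lemma summable_norm_binT (β : ℝ) {x : ℝ} (hx : |x| < 1) :
    Summable fun n => ‖binT β x n‖ := by
  refine summable_of_ratio_tendsto (abs_nonneg x) hx
    (q := fun n => |β + n| / (n + 1) * |x|) ?_ ?_
  · filter_upwards with n
    rw [norm_norm, norm_norm, binT_succ]
    rw [norm_mul]
    rw [mul_comm (|β + ↑n| / (↑n + 1) * |x|)]
    congr 1
    rw [Real.norm_eq_abs, abs_div, abs_mul, abs_of_nonneg (by positivity : (0:ℝ) ≤ (n:ℝ)+1)]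
    ring
  · simpa using (tendsto_abs_ratio β).mul_const |x|

lemma summable_binT (β : ℝ) {x : ℝ} (hx : |x| < 1) : Summable fun n => binT β x n :=
  (summable_norm_binT β hx).of_norm

noncomputable def dT (β x : ℝ) (n : ℕ) : ℝ :=
  (ascPochhammer ℝ n).eval β / n.factorial * ((n : ℝ) * x ^ (n - 1))

lemma hasDerivAt_binT (β : ℝ) (n : ℕ) (x : ℝ) :
    HasDerivAt (fun y => binT β y n) (dT β x n) x := by
  have h : (fun y => binT β y n) = fun y => (ascPochhammer ℝ n).eval β / n.factorial * y ^ n := by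
    funext y; rw [binT]; ring
  rw [h, dT]
  exact (hasDerivAt_pow n x).const_mul _

lemma dT_succ (β x : ℝ) (n : ℕ) :
    dT β x (n + 1) = (β + n) * binT β x n := by
  have h1 : ((n + 1).factorial : ℝ) = (n + 1) * n.factorial := by
    rw [Nat.factorial_succ]; push_cast; ring
  have h2 : (n.factorial : ℝ) ≠ 0 := Nat.cast_ne_zero.mpr (Nat.factorial_ne_zero n)
  have h3 : ((n : ℝ) + 1) ≠ 0 := by positivity
  rw [dT, binT, ascPochhammer_succ_eval, h1]
  push_cast
  field_simp

lemma tendsto_abs_ratio' (β : ℝ) :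
    Tendsto (fun n : ℕ => |β + n| / n) atTop (𝓝 1) := by
  have h0 : Tendsto (fun n : ℕ => 1 + β * (1 / (n : ℝ))) atTop (𝓝 1) := by
    have h := tendsto_one_div_atTop_nhds_zero_nat.const_mul β
    simpa using tendsto_const_nhds.add h
  refine h0.congr' ?_
  filter_upwards [tendsto_natCast_atTop_atTop.eventually (eventually_ge_atTop (max (-β) 1))] with n hn
  have hβn : (0:ℝ) ≤ β + n := by have := le_of_max_le_left hn; linarith
  have hn1 : (n:ℝ) ≠ 0 := by have := le_of_max_le_right hn; positivity
  rw [abs_of_nonneg hβn]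
  field_simp
  ring

lemma summable_norm_dT (β : ℝ) {x : ℝ} (hx : |x| < 1) :
    Summable fun n => ‖dT β x n‖ := by
  refine summable_of_ratio_tendsto (abs_nonneg x) hx
    (q := fun n => |β + n| / n * |x|) ?_ ?_
  · filter_upwards [eventually_ge_atTop 1] with n hn
    have h2 : (n.factorial : ℝ) ≠ 0 := Nat.cast_ne_zero.mpr (Nat.factorial_ne_zero n)
    have hn1 : n - 1 + 1 = n := Nat.succ_pred_eq_of_pos hn
    have hxp : |x| * |x| ^ (n-1) = |x| ^ n := by
      rw [← pow_succ', hn1]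
    have hnne : (n:ℝ) ≠ 0 := Nat.cast_ne_zero.mpr (by omega)
    rw [norm_norm, norm_norm, dT_succ]; simp only [dT, binT]
    simp only [Real.norm_eq_abs, abs_mul, abs_div, abs_pow]
    rw [abs_of_nonneg (show (0:ℝ) ≤ (n:ℝ) by positivity), abs_of_nonneg (show (0:ℝ) ≤ (n.factorial:ℝ) by positivity), ← hxp]
    field_simp
  · simpa using (tendsto_abs_ratio' β).mul_const |x|

noncomputable def Sb (β x : ℝ) : ℝ := ∑' n, binT β x n

lemma hasDerivAt_Sb (β : ℝ) {x : ℝ} (hx : |x| < 1) :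
    HasDerivAt (fun y => Sb β y) (∑' n, dT β x n) x := by
  set ρ : ℝ := (1 + |x|) / 2 with hρ
  have hρ0 : 0 < ρ := by positivity
  have hρ1 : ρ < 1 := by rw [hρ]; linarith
  have hxρ : |x| < ρ := by rw [hρ]; linarith
  have hρa : |ρ| < 1 := by rw [abs_of_pos hρ0]; exact hρ1
  refine hasDerivAt_tsum_of_isPreconnected (u := fun n => ‖dT β ρ n‖) (y₀ := x)
    (summable_norm_dT β hρa) (isOpen_Ioo (a := -ρ) (b := ρ)) (convex_Ioo _ _).isPreconnected
    (fun n y _ => hasDerivAt_binT β n y) ?_ ?_ ?_ ?_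
  · intro n y hy
    have hyρ : |y| ≤ ρ := by
      rw [abs_le]; exact ⟨hy.1.le, hy.2.le⟩
    simp only [dT, Real.norm_eq_abs, abs_mul, abs_pow]
    rw [abs_of_pos hρ0]
    gcongr
  · rw [Set.mem_Ioo]; constructor <;> [linarith [neg_abs_le x]; linarith [le_abs_self x]]
  · exact summable_binT β hx
  · rw [Set.mem_Ioo]; constructor <;> [linarith [neg_abs_le x]; linarith [le_abs_self x]]

lemma Sb_ode (β : ℝ) {x : ℝ} (hx : |x| < 1) :
    (1 - x) * (∑' n, dT β x n) = β * Sb β x := by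
  have hsum : Summable fun n => dT β x n := (summable_norm_dT β hx).of_norm
  have hsb : Summable fun n => binT β x n := summable_binT β hx
  have hshift : (∑' n, dT β x n) = ∑' n, dT β x (n + 1) := by
    rw [Summable.tsum_eq_zero_add hsum]
    simp [dT]
  have hxd : ∀ n : ℕ, (n : ℝ) * x ^ (n - 1) * x = n * x ^ n := by
    intro n
    cases n with
    | zero => simp
    | succ k => rw [Nat.add_sub_cancel, pow_succ]; ring
  have key : ∀ n : ℕ, dT β x (n + 1) = β * binT β x n + x * dT β x n := by
    intro n
    rw [dT_succ]
    simp only [dT, binT]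
    rw [show x * ((ascPochhammer ℝ n).eval β / ↑n.factorial * (↑n * x ^ (n - 1)))
        = (ascPochhammer ℝ n).eval β / ↑n.factorial * (↑n * x ^ (n - 1) * x) by ring, hxd n]
    ring
  have h1 : ∑' n, dT β x (n + 1) = ∑' n, (β * binT β x n + x * dT β x n) := tsum_congr key
  have h2 : (∑' n, dT β x n) = β * Sb β x + x * (∑' n, dT β x n) := by
    conv_lhs => rw [hshift]
    rw [h1, Summable.tsum_add (hsb.mul_left β) (hsum.mul_left x), tsum_mul_left, tsum_mul_left, Sb]
  rw [sub_mul, one_mul]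
  linarith [h2]

lemma Sb_eq (β : ℝ) {x : ℝ} (hx : |x| < 1) : Sb β x = (1 - x) ^ (-β) := by
  -- h y = Sb β y * (1-y)^β has zero derivative on (-1,1)
  have habs : ∀ y : ℝ, y ∈ Set.Ioo (-1:ℝ) 1 → |y| < 1 := by
    intro y hy; rw [abs_lt]; exact ⟨hy.1, hy.2⟩
  have hderiv : ∀ y ∈ Set.Ioo (-1:ℝ) 1,
      HasDerivAt (fun z => Sb β z * (1 - z) ^ β) 0 y := by
    intro y hy
    have hy1 : (0:ℝ) < 1 - y := by linarith [hy.2]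
    have hS := hasDerivAt_Sb β (habs y hy)
    have hr : HasDerivAt (fun z : ℝ => (1 - z) ^ β) (β * (1 - y) ^ (β - 1) * (-1)) y := by
      have h1 : HasDerivAt (fun z : ℝ => 1 - z) (-1) y := by
        simpa using (hasDerivAt_id y).const_sub 1
      exact (Real.hasDerivAt_rpow_const (Or.inl hy1.ne')).comp y h1
    have hprod := hS.mul hr
    have hode := Sb_ode β (habs y hy)
    have hpow : (1 - y) ^ β = (1 - y) ^ (β - 1) * (1 - y) := by
      rw [← Real.rpow_add_one hy1.ne']; ring_nf
    have hval : (∑' n, dT β y n) * (1 - y) ^ β + Sb β y * (β * (1 - y) ^ (β - 1) * -1) = 0 := by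
      rw [hpow, show (∑' n, dT β y n) * ((1 - y) ^ (β - 1) * (1 - y))
          + Sb β y * (β * (1 - y) ^ (β - 1) * -1)
          = (1 - y) ^ (β - 1) * ((1 - y) * (∑' n, dT β y n) - β * Sb β y) by ring,
        hode, sub_self, mul_zero]
    rwa [hval] at hprod
  -- constancy on [min x 0, max x 0]
  set A := min x 0
  set B := max x 0
  have hA : A ∈ Set.Ioo (-1:ℝ) 1 := by
    constructor
    · simp only [A, lt_min_iff]; exact ⟨by linarith [neg_abs_le x], by linarith⟩
    · calc A ≤ 0 := min_le_right _ _
        _ < 1 := one_pos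
  have hsub : Set.Icc A B ⊆ Set.Ioo (-1:ℝ) 1 := by
    intro y hy
    constructor
    · exact lt_of_lt_of_le hA.1 hy.1
    · have : B < 1 := by
        simp only [B, max_lt_iff]; exact ⟨by linarith [le_abs_self x], one_pos⟩
      linarith [hy.2]
  have hconst := constant_of_has_deriv_right_zero
    (f := fun z => Sb β z * (1 - z) ^ β) (a := A) (b := B)
    (fun y hy => ((hderiv y (hsub hy)).continuousAt).continuousWithinAt)
    (fun y hy => ((hderiv y (hsub (Set.Ico_subset_Icc_self hy))).hasDerivWithinAt))
  have hx0 : Sb β x * (1 - x) ^ β = Sb β 0 * (1 - 0) ^ β := by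
    have h1 := hconst x ⟨min_le_left _ _, le_max_left _ _⟩
    have h2 := hconst 0 ⟨min_le_right _ _, le_max_right _ _⟩
    simpa using h1.trans h2.symm
  have hS0 : Sb β 0 = 1 := by
    rw [Sb, tsum_eq_single 0 (fun n hn => by simp [binT, zero_pow hn])]
    exact binT_zero β 0
  have hx1 : (0:ℝ) < 1 - x := by linarith [le_abs_self x]
  have hpb : (0:ℝ) < (1 - x) ^ β := Real.rpow_pos_of_pos hx1 β
  rw [hS0, sub_zero, Real.one_rpow, mul_one] at hx0
  rw [Real.rpow_neg hx1.le]
  field_simp at hx0 ⊢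
  linarith [hx0]

lemma hasSum_binomial (β : ℝ) {x : ℝ} (hx : |x| < 1) :
    HasSum (fun n => (ascPochhammer ℝ n).eval β * x ^ n / n.factorial) ((1 - x) ^ (-β)) := by
  have := (summable_binT β hx).hasSum
  rw [show (∑' n, binT β x n) = (1 - x) ^ (-β) from Sb_eq β hx] at this
  exact this

lemma poch_pos {x : ℝ} (hx : 0 < x) (n : ℕ) : 0 < (ascPochhammer ℝ n).eval x := by
  induction n with
  | zero => simp [ascPochhammer_zero]
  | succ k ih =>
    rw [ascPochhammer_succ_eval]
    exact mul_pos ih (by positivity)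

lemma poch_half (n : ℕ) :
    (ascPochhammer ℝ n).eval (3/2) = (2 * n + 1) * (ascPochhammer ℝ n).eval (1/2) := by
  induction n with
  | zero => simp
  | succ k ih =>
    rw [ascPochhammer_succ_eval, ascPochhammer_succ_eval, ih]
    push_cast
    ring

lemma norm_binT_mono (β : ℝ) {x y : ℝ} (h0 : 0 ≤ x) (hxy : x ≤ y) (n : ℕ) :
    ‖binT β x n‖ ≤ ‖binT β y n‖ := by
  simp only [binT, norm_div, norm_mul, norm_pow, Real.norm_eq_abs]
  gcongr

noncomputable def appellF1 (a b b' c x y : ℝ) : ℝ :=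
  ∑' p : ℕ × ℕ, ((ascPochhammer ℝ (p.1 + p.2)).eval a * (ascPochhammer ℝ p.1).eval b *
    (ascPochhammer ℝ p.2).eval b' /
    ((ascPochhammer ℝ (p.1 + p.2)).eval c * p.1.factorial * p.2.factorial)) * x ^ p.1 * y ^ p.2

theorem stmt5 (a m : ℝ) (ha : 0 < a) (hm : 0 < m) :
    ∀ θ ∈ Set.Ioo (0:ℝ) (Real.pi/2),
      HasDerivAt (fun t : ℝ => -(1 + a) ^ (-m) * Real.cos t *
          appellF1 (1/2) (1/2 - m) m (3/2) (Real.cos t ^ 2) (Real.cos t ^ 2 / (1 + a)))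
        ((1 + a / Real.sin θ ^ 2) ^ (-m)) θ := by
  intro θ hθ
  obtain ⟨hθ0, hθp⟩ := hθ
  have hπ := Real.pi_pos
  have h1a : (0:ℝ) < 1 + a := by linarith
  set b : ℝ := 1/2 - m with hbdef
  -- coefficients
  set c : ℕ × ℕ → ℝ := fun p =>
    (ascPochhammer ℝ (p.1 + p.2)).eval (1/2) * (ascPochhammer ℝ p.1).eval b *
      (ascPochhammer ℝ p.2).eval m /
      ((ascPochhammer ℝ (p.1 + p.2)).eval (3/2) * p.1.factorial * p.2.factorial) with hcdef
  have hceq : ∀ p : ℕ × ℕ, c p = (ascPochhammer ℝ p.1).eval b * (ascPochhammer ℝ p.2).eval m /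
      (((2 * (p.1 + p.2) + 1 : ℕ) : ℝ) * p.1.factorial * p.2.factorial) := by
    intro p
    have h12 : (0:ℝ) < (ascPochhammer ℝ (p.1 + p.2)).eval (1/2) := poch_pos (by norm_num) _
    have hf1 : ((p.1.factorial : ℝ)) ≠ 0 := Nat.cast_ne_zero.mpr (Nat.factorial_ne_zero _)
    have hf2 : ((p.2.factorial : ℝ)) ≠ 0 := Nat.cast_ne_zero.mpr (Nat.factorial_ne_zero _)
    have h2n : ((2 * (p.1 + p.2) + 1 : ℕ) : ℝ) = 2 * ((p.1 + p.2 : ℕ) : ℝ) + 1 := by push_cast; ring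
    simp only [hcdef]
    rw [poch_half, h2n]
    have h2n0 : (2:ℝ) * ((p.1 + p.2 : ℕ) : ℝ) + 1 ≠ 0 := by positivity
    field_simp
  -- series terms
  set g : ℕ × ℕ → ℝ → ℝ := fun p t =>
    -(1 + a) ^ (-m) * (c p * ((1 + a) ^ p.2)⁻¹) * Real.cos t ^ (2 * (p.1 + p.2) + 1) with hgdef
  set g' : ℕ × ℕ → ℝ → ℝ := fun p t =>
    -(1 + a) ^ (-m) * (c p * ((1 + a) ^ p.2)⁻¹) *
      (((2 * (p.1 + p.2) + 1 : ℕ) : ℝ) * Real.cos t ^ (2 * (p.1 + p.2)) * (-Real.sin t)) with hg'def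
  have hpow1 : ∀ (x : ℝ) (p : ℕ × ℕ), x ^ (2 * (p.1 + p.2) + 1) = x * (x ^ 2) ^ p.1 * (x ^ 2) ^ p.2 := by
    intro x p
    rw [show 2 * (p.1 + p.2) + 1 = 1 + 2 * p.1 + 2 * p.2 by ring, pow_add, pow_add, pow_one,
      pow_mul, pow_mul]
  have hpow2 : ∀ (x : ℝ) (p : ℕ × ℕ), x ^ (2 * (p.1 + p.2)) = (x ^ 2) ^ p.1 * (x ^ 2) ^ p.2 := by
    intro x p
    rw [show 2 * (p.1 + p.2) = 2 * p.1 + 2 * p.2 by ring, pow_add, pow_mul, pow_mul]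
  -- function equality
  have hfun : (fun t : ℝ => -(1 + a) ^ (-m) * Real.cos t *
      appellF1 (1/2) (1/2 - m) m (3/2) (Real.cos t ^ 2) (Real.cos t ^ 2 / (1 + a)))
      = fun t => ∑' p : ℕ × ℕ, g p t := by
    funext t
    rw [appellF1, ← tsum_mul_left]
    refine tsum_congr fun p => ?_
    simp only [hgdef, ← hbdef, ← hcdef]
    rw [hpow1, div_pow]
    ring
  -- termwise derivatives
  have hgderiv : ∀ (p : ℕ × ℕ) (y : ℝ), HasDerivAt (g p) (g' p y) y := by
    intro p y
    have h1 : HasDerivAt (fun t : ℝ => Real.cos t ^ (2 * (p.1 + p.2) + 1))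
        (((2 * (p.1 + p.2) + 1 : ℕ) : ℝ) * Real.cos y ^ (2 * (p.1 + p.2)) * (-Real.sin y)) y := by
      have := (Real.hasDerivAt_cos y).pow (2 * (p.1 + p.2) + 1)
      simpa [Pi.pow_def] using this
    simpa only [hgdef, hg'def] using h1.const_mul (-(1 + a) ^ (-m) * (c p * ((1 + a) ^ p.2)⁻¹))
  -- structured formulas
  have hg'eq : ∀ (p : ℕ × ℕ) (y : ℝ), g' p y =
      ((1 + a) ^ (-m) * Real.sin y * binT b (Real.cos y ^ 2) p.1) *
        binT m (Real.cos y ^ 2 / (1 + a)) p.2 := by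
    intro p y
    simp only [hg'def, binT]
    rw [hceq p, hpow2, div_pow]
    have hne : ((1 + a) ^ p.2 : ℝ) ≠ 0 := by positivity
    have hf1 : ((p.1.factorial : ℝ)) ≠ 0 := Nat.cast_ne_zero.mpr (Nat.factorial_ne_zero _)
    have hf2 : ((p.2.factorial : ℝ)) ≠ 0 := Nat.cast_ne_zero.mpr (Nat.factorial_ne_zero _)
    have h2n0 : ((2 * (p.1 + p.2) + 1 : ℕ) : ℝ) ≠ 0 := by positivity
    field_simp
  have hgeq : ∀ (p : ℕ × ℕ) (y : ℝ), g p y =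
      -((1 + a) ^ (-m) * Real.cos y * (((2 * (p.1 + p.2) + 1 : ℕ) : ℝ))⁻¹) *
        (binT b (Real.cos y ^ 2) p.1 * binT m (Real.cos y ^ 2 / (1 + a)) p.2) := by
    intro p y
    simp only [hgdef, binT]
    rw [hceq p, hpow1, div_pow]
    have hne : ((1 + a) ^ p.2 : ℝ) ≠ 0 := by positivity
    have hf1 : ((p.1.factorial : ℝ)) ≠ 0 := Nat.cast_ne_zero.mpr (Nat.factorial_ne_zero _)
    have hf2 : ((p.2.factorial : ℝ)) ≠ 0 := Nat.cast_ne_zero.mpr (Nat.factorial_ne_zero _)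
    have h2n0 : ((2 * (p.1 + p.2) + 1 : ℕ) : ℝ) ≠ 0 := by positivity
    field_simp
  -- geometry
  set θ₂ : ℝ := (θ + π/2)/2 with hθ₂def
  set r : ℝ := Real.cos (θ/2) with hrdef
  have hθ₂1 : θ < θ₂ := by rw [hθ₂def]; linarith
  have hθ₂2 : θ₂ < π/2 := by rw [hθ₂def]; linarith
  have hr0 : 0 < r := Real.cos_pos_of_mem_Ioo ⟨by linarith, by linarith⟩
  have hr1 : r < 1 := by
    have h := Real.cos_lt_cos_of_nonneg_of_le_pi (le_refl 0) (by linarith) (by linarith : (0:ℝ) < θ/2)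
    rwa [Real.cos_zero] at h
  have hr2 : |r ^ 2| < 1 := by
    rw [abs_of_pos (by positivity)]
    nlinarith
  have hv2 : |r ^ 2 / (1 + a)| < 1 := by
    rw [abs_of_pos (by positivity)]
    rw [div_lt_one h1a]
    nlinarith
  have hApos : (0:ℝ) < (1 + a) ^ (-m) := Real.rpow_pos_of_pos h1a _
  -- bound series
  set u : ℕ × ℕ → ℝ := fun p => ‖binT b (r ^ 2) p.1‖ * ((1 + a) ^ (-m) * ‖binT m (r ^ 2 / (1 + a)) p.2‖)
    with hudef
  have hu : Summable u := by
    refine Summable.mul_of_nonneg (summable_norm_binT b hr2)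
      ((summable_norm_binT m hv2).mul_left _) (fun j => norm_nonneg _)
      (fun k => mul_nonneg hApos.le (norm_nonneg _))
  -- facts on the interval
  have hyfacts : ∀ y ∈ Set.Ioo (θ/2) θ₂, 0 < Real.cos y ∧ Real.cos y ≤ r ∧ |Real.sin y| ≤ 1 := by
    intro y hy
    obtain ⟨hy1, hy2⟩ := hy
    refine ⟨Real.cos_pos_of_mem_Ioo ⟨by linarith, by linarith⟩, ?_, ?_⟩
    · exact le_of_lt (Real.cos_lt_cos_of_nonneg_of_le_pi (by linarith) (by linarith) hy1)
    · exact abs_le.mpr ⟨Real.neg_one_le_sin y, Real.sin_le_one y⟩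
  have hbound : ∀ (p : ℕ × ℕ), ∀ y ∈ Set.Ioo (θ/2) θ₂, ‖g' p y‖ ≤ u p := by
    intro p y hy
    obtain ⟨hc0, hcr, hs1⟩ := hyfacts y hy
    have hcsq : Real.cos y ^ 2 ≤ r ^ 2 := by nlinarith
    rw [hg'eq p y, hudef]
    rw [norm_mul, norm_mul, norm_mul, Real.norm_eq_abs ((1+a) ^ (-m)), abs_of_pos hApos]
    calc (1 + a) ^ (-m) * ‖Real.sin y‖ * ‖binT b (Real.cos y ^ 2) p.1‖ *
          ‖binT m (Real.cos y ^ 2 / (1 + a)) p.2‖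
        ≤ (1 + a) ^ (-m) * 1 * ‖binT b (r ^ 2) p.1‖ * ‖binT m (r ^ 2 / (1 + a)) p.2‖ := by
          gcongr
          · exact hs1
          · exact norm_binT_mono b (by positivity) hcsq p.1
          · exact norm_binT_mono m (by positivity) (by gcongr) p.2
      _ = ‖binT b (r ^ 2) p.1‖ * ((1 + a) ^ (-m) * ‖binT m (r ^ 2 / (1 + a)) p.2‖) := by ring
  have hθmem : θ ∈ Set.Ioo (θ/2) θ₂ := ⟨by linarith, hθ₂1⟩
  have hg0 : Summable fun p => g p θ := by
    refine Summable.of_norm_bounded hu ?_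
    intro p
    obtain ⟨hc0, hcr, hs1⟩ := hyfacts θ hθmem
    have hcsq : Real.cos θ ^ 2 ≤ r ^ 2 := by nlinarith
    have h2n1 : (1:ℝ) ≤ ((2 * (p.1 + p.2) + 1 : ℕ) : ℝ) := by
      have : (1:ℕ) ≤ 2 * (p.1 + p.2) + 1 := by omega
      exact_mod_cast this
    rw [hgeq p θ, hudef]
    rw [norm_mul, norm_neg, norm_mul, norm_mul, norm_mul, Real.norm_eq_abs ((1+a) ^ (-m)),
      abs_of_pos hApos]
    calc (1 + a) ^ (-m) * ‖Real.cos θ‖ * ‖(((2 * (p.1 + p.2) + 1 : ℕ) : ℝ))⁻¹‖ *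
          (‖binT b (Real.cos θ ^ 2) p.1‖ * ‖binT m (Real.cos θ ^ 2 / (1 + a)) p.2‖)
        ≤ (1 + a) ^ (-m) * 1 * 1 * (‖binT b (r ^ 2) p.1‖ * ‖binT m (r ^ 2 / (1 + a)) p.2‖) := by
          gcongr
          · rw [Real.norm_eq_abs, abs_of_pos hc0]
            nlinarith
          · rw [Real.norm_eq_abs, abs_of_pos (by positivity : (0:ℝ) < (((2 * (p.1 + p.2) + 1 : ℕ) : ℝ))⁻¹)]
            rw [inv_le_one_iff₀]
            right
            exact h2n1
          · exact norm_binT_mono b (by positivity) hcsq p.1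
          · exact norm_binT_mono m (by positivity) (by gcongr) p.2
      _ = ‖binT b (r ^ 2) p.1‖ * ((1 + a) ^ (-m) * ‖binT m (r ^ 2 / (1 + a)) p.2‖) := by ring
  have hkey : HasDerivAt (fun z => ∑' p : ℕ × ℕ, g p z) (∑' p : ℕ × ℕ, g' p θ) θ :=
    hasDerivAt_tsum_of_isPreconnected hu isOpen_Ioo (convex_Ioo _ _).isPreconnected
      (fun p y _ => hgderiv p y) hbound hθmem hg0 hθmem
  -- value of the derivative series at θ
  obtain ⟨hc0, hcr, hsabs⟩ := hyfacts θ hθmem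
  have hsθ : 0 < Real.sin θ := Real.sin_pos_of_pos_of_lt_pi hθ0 (by linarith)
  have hw1 : |Real.cos θ ^ 2| < 1 := by
    rw [abs_of_pos (by positivity)]
    nlinarith
  have hv1 : |Real.cos θ ^ 2 / (1 + a)| < 1 := by
    rw [abs_of_pos (by positivity), div_lt_one h1a]
    nlinarith
  set C : ℝ := (1 + a) ^ (-m) * Real.sin θ with hCdef
  have hs1 : HasSum (fun j => C * binT b (Real.cos θ ^ 2) j)
      (C * (1 - Real.cos θ ^ 2) ^ (-b)) := (hasSum_binomial b hw1).mul_left C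
  have hs2 : HasSum (fun k => binT m (Real.cos θ ^ 2 / (1 + a)) k)
      ((1 - Real.cos θ ^ 2 / (1 + a)) ^ (-m)) := hasSum_binomial m hv1
  have hsmul : Summable (fun p : ℕ × ℕ =>
      (C * binT b (Real.cos θ ^ 2) p.1) * binT m (Real.cos θ ^ 2 / (1 + a)) p.2) := by
    refine Summable.of_norm ?_
    have h1 : Summable fun j => ‖C * binT b (Real.cos θ ^ 2) j‖ := by
      refine ((summable_norm_binT b hw1).mul_left ‖C‖).congr fun j => ?_
      exact (norm_mul C _).symm
    exact Summable.mul_norm (f := fun j => C * binT b (Real.cos θ ^ 2) j)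
      (g := fun k => binT m (Real.cos θ ^ 2 / (1 + a)) k) h1 (summable_norm_binT m hv1)
  have hprod := hs1.mul hs2 hsmul
  have hval : (∑' p : ℕ × ℕ, g' p θ)
      = C * (1 - Real.cos θ ^ 2) ^ (-b) * (1 - Real.cos θ ^ 2 / (1 + a)) ^ (-m) := by
    rw [tsum_congr (fun p => hg'eq p θ)]
    exact hprod.tsum_eq
  -- algebraic simplification
  have hss : Real.sin θ ^ 2 = 1 - Real.cos θ ^ 2 := Real.sin_sq θ
  have hs2pos : (0:ℝ) < Real.sin θ ^ 2 := by positivity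
  have haspos : (0:ℝ) < a + Real.sin θ ^ 2 := by positivity
  have h2 : 1 - Real.cos θ ^ 2 / (1 + a) = (a + Real.sin θ ^ 2) / (1 + a) := by
    field_simp
    linarith [hss]
  have e2 : Real.sin θ * (Real.sin θ ^ 2) ^ (-b) = (Real.sin θ ^ 2) ^ m := by
    have t1 : (Real.sin θ ^ 2 : ℝ) ^ (-b) = Real.sin θ ^ (2 * (-b)) := by
      rw [← Real.rpow_natCast (Real.sin θ) 2, ← Real.rpow_mul hsθ.le]
      norm_num
    have t2 : (Real.sin θ ^ 2 : ℝ) ^ m = Real.sin θ ^ (2 * m) := by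
      rw [← Real.rpow_natCast (Real.sin θ) 2, ← Real.rpow_mul hsθ.le]
      norm_num
    rw [t1, t2]
    nth_rewrite 1 [← Real.rpow_one (Real.sin θ)]
    rw [← Real.rpow_add hsθ]
    congr 1
    rw [hbdef]
    ring
  have e3 : 1 + a / Real.sin θ ^ 2 = (a + Real.sin θ ^ 2) / Real.sin θ ^ 2 := by
    field_simp
    ring
  have hfinal : C * (1 - Real.cos θ ^ 2) ^ (-b) * (1 - Real.cos θ ^ 2 / (1 + a)) ^ (-m)
      = (1 + a / Real.sin θ ^ 2) ^ (-m) := by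
    rw [h2, e3, ← hss, hCdef]
    rw [Real.div_rpow haspos.le h1a.le, Real.div_rpow haspos.le hs2pos.le]
    rw [mul_assoc ((1 + a) ^ (-m)) (Real.sin θ) _, e2]
    have hne1 : ((1 + a) : ℝ) ^ (-m) ≠ 0 := ne_of_gt hApos
    have hne2 : (Real.sin θ ^ 2 : ℝ) ^ (-m) ≠ 0 := ne_of_gt (Real.rpow_pos_of_pos hs2pos _)
    have hinv : (Real.sin θ ^ 2 : ℝ) ^ (-m) = ((Real.sin θ ^ 2 : ℝ) ^ m)⁻¹ :=
      Real.rpow_neg hs2pos.le m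
    rw [hinv]
    have hne3 : ((Real.sin θ ^ 2 : ℝ) ^ m) ≠ 0 := ne_of_gt (Real.rpow_pos_of_pos hs2pos _)
    field_simp
  rw [hfun, ← hfinal, ← hval]
  exact hkey
end

section
/- For reals a, b > 0, m, n > 0, and l ≥ 0, the function u ↦ u^{l+1/2}/((1+2l)(1+a)^m(1+b)^n) · F₁(l + 1/2; m, n; l + 3/2; u/(1+a), u/(1+b)) is an antiderivative of u ↦ (1/2) u^{l−1/2} (1 − u + a)^{−m} (1 − u + b)^{−n} on the open interval (0, 1). -/
open Real

open Filter Topology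

namespace Stmt9Aux

noncomputable def bc (m : ℝ) (j : ℕ) : ℝ := (ascPochhammer ℝ j).eval m / j.factorial

lemma bc_pos {m : ℝ} (hm : 0 < m) (j : ℕ) : 0 < bc m j :=
  div_pos (ascPochhammer_pos j m hm) (by positivity)
lemma bc_zero (m : ℝ) : bc m 0 = 1 := by simp [bc]
lemma bc_succ_mul (m : ℝ) (j : ℕ) : bc m (j+1) * (j+1) = bc m j * (m + j) := by
  have hj : ((j.factorial : ℝ)) ≠ 0 := by positivity
  rw [bc, bc, ascPochhammer_succ_eval, Nat.factorial_succ]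
  push_cast
  field_simp

lemma poch_succ_left_eval (m : ℝ) (j : ℕ) :
    (ascPochhammer ℝ (j+1)).eval m = m * (ascPochhammer ℝ j).eval (m + 1) := by
  rw [ascPochhammer_succ_left, Polynomial.eval_mul, Polynomial.eval_X, Polynomial.eval_comp]
  simp

lemma bc_succ_left (m : ℝ) (j : ℕ) : bc m (j+1) * (j+1) = m * bc (m+1) j := by
  have hj : ((j.factorial : ℝ)) ≠ 0 := by positivity
  rw [bc, bc, poch_succ_left_eval, Nat.factorial_succ]
  push_cast
  field_simp

lemma bc_summable {m : ℝ} (hm : 0 < m) {r : ℝ} (h0 : 0 ≤ r) (h1 : r < 1) :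
    Summable (fun j : ℕ => bc m j * r ^ j) := by
  rcases h0.eq_or_lt with h|h
  · apply summable_of_ne_finset_zero (s := {0})
    intro j hj
    simp only [Finset.mem_singleton] at hj
    rw [← h, zero_pow hj, mul_zero]
  · apply summable_of_ratio_test_tendsto_lt_one h1
    · filter_upwards with j
      exact (mul_pos (bc_pos hm j) (pow_pos h j)).ne'
    · have key : ∀ j : ℕ, ‖bc m (j+1) * r ^ (j+1)‖ / ‖bc m j * r ^ j‖
          = (m + j)/(j+1) * r := by
        intro j
        have h1p : (0:ℝ) < (j:ℝ) + 1 := by positivity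
        rw [Real.norm_eq_abs, Real.norm_eq_abs,
          abs_of_pos (mul_pos (bc_pos hm _) (pow_pos h _)),
          abs_of_pos (mul_pos (bc_pos hm _) (pow_pos h _))]
        have hb := bc_succ_mul m j
        have hbj : bc m j ≠ 0 := (bc_pos hm j).ne'
        have hrj : r ^ j ≠ 0 := (pow_pos h j).ne'
        have : bc m (j+1) = bc m j * (m + j) / (j+1) := by
          field_simp at hb ⊢; linarith [hb]
        rw [this, pow_succ]
        field_simp
      simp_rw [key]
      have h2 : Tendsto (fun j : ℕ => (m + j)/((j:ℝ)+1)) atTop (𝓝 1) := by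
        have ha : Tendsto (fun j : ℕ => (j:ℝ)/((j:ℝ)+1)) atTop (𝓝 1) :=
          tendsto_natCast_div_add_atTop (1:ℝ)
        have hb : Tendsto (fun j : ℕ => m/((j:ℝ)+1)) atTop (𝓝 0) := by
          simpa [div_eq_mul_inv] using (tendsto_one_div_add_atTop_nhds_zero_nat).const_mul m
        have := ha.add hb
        simp only [add_zero] at this
        apply this.congr
        intro j
        field_simp
        ring
      have := h2.mul_const r
      simpa using this


section Binomial

variable {m : ℝ}

lemma deriv_coeff_summable (hm : 0 < m) {r : ℝ} (h0 : 0 ≤ r) (h1 : r < 1) :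
    Summable (fun j : ℕ => bc m j * (j * r ^ (j-1))) := by
  rw [← summable_nat_add_iff 1]
  have heq : (fun j : ℕ => bc m (j + 1) * ((j + 1 : ℕ) * r ^ (j + 1 - 1)))
      = fun j : ℕ => m * (bc (m+1) j * r ^ j) := by
    funext j
    have h := bc_succ_left m j
    simp only [Nat.add_sub_cancel]
    push_cast
    linear_combination r ^ j * h
  rw [heq]
  exact (bc_summable (by linarith) h0 h1).mul_left m

/-- termwise derivative of the binomial series on `Ioo (-r) r` -/
lemma binseries_hasDerivAt (hm : 0 < m) {r : ℝ} (hr0 : 0 < r) (hr1 : r < 1) :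
    ∀ y ∈ Set.Ioo (-r) r,
      HasDerivAt (fun z => ∑' j : ℕ, bc m j * z ^ j)
        (∑' j : ℕ, bc m j * (j * y ^ (j-1))) y := by
  intro y hy
  apply hasDerivAt_tsum_of_isPreconnected
    (u := fun j : ℕ => bc m j * (j * r ^ (j-1)))
    (deriv_coeff_summable hm hr0.le hr1) isOpen_Ioo (convex_Ioo _ _).isPreconnected
    (g := fun j z => bc m j * z ^ j) (g' := fun j z => bc m j * (j * z ^ (j-1)))
    (y₀ := 0)
  · intro j z hz
    exact (hasDerivAt_pow j z).const_mul (bc m j)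
  · intro j z hz
    rw [Real.norm_eq_abs, abs_mul, abs_of_pos (bc_pos hm j), abs_mul, Nat.abs_cast]
    have hz' : |z| ≤ r := by
      rw [abs_le]
      exact ⟨hz.1.le, hz.2.le⟩
    have : |z ^ (j-1)| ≤ r ^ (j-1) := by
      rw [abs_pow]
      exact pow_le_pow_left₀ (abs_nonneg z) hz' _
    gcongr
    exact (bc_pos hm j).le
  · exact ⟨neg_neg_iff_pos.mpr hr0, hr0⟩
  · apply summable_of_ne_finset_zero (s := {0})
    intro j hj
    simp only [Finset.mem_singleton] at hj
    simp [zero_pow hj]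
  · exact hy

/-- summability of the series itself anywhere in `Ioo (-r) r` -/
lemma binseries_summable' (hm : 0 < m) {r : ℝ} (hr1 : r < 1) {y : ℝ} (hy : |y| ≤ r) :
    Summable (fun j : ℕ => bc m j * y ^ j) := by
  have hr0 : 0 ≤ r := le_trans (abs_nonneg y) hy
  apply Summable.of_norm_bounded (bc_summable hm hr0 hr1)
  intro j
  rw [Real.norm_eq_abs, abs_mul, abs_of_pos (bc_pos hm j), abs_pow]
  exact mul_le_mul_of_nonneg_left (pow_le_pow_left₀ (abs_nonneg y) hy j) (bc_pos hm j).le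

/-- the ODE identity -/
lemma binseries_ode (hm : 0 < m) {r : ℝ} (hr0 : 0 < r) (hr1 : r < 1) {y : ℝ}
    (hy : y ∈ Set.Ioo (-r) r) :
    (1 - y) * (∑' j : ℕ, bc m j * (j * y ^ (j-1))) = m * ∑' j : ℕ, bc m j * y ^ j := by
  have hyr : |y| ≤ r := by rw [abs_le]; exact ⟨hy.1.le, hy.2.le⟩
  have hsum : Summable (fun j : ℕ => bc m j * (j * y ^ (j-1))) := by
    apply Summable.of_norm_bounded (deriv_coeff_summable hm hr0.le hr1)
    intro j
    rw [Real.norm_eq_abs, abs_mul, abs_of_pos (bc_pos hm j), abs_mul, Nat.abs_cast, abs_pow]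
    have h1' : |y| ^ (j-1) ≤ r ^ (j-1) := pow_le_pow_left₀ (abs_nonneg y) hyr _
    gcongr
    exact (bc_pos hm j).le
  set S := ∑' j : ℕ, bc m j * (j * y ^ (j-1)) with hS
  have h0 : HasSum (fun j : ℕ => bc m j * (j * y ^ (j-1))) S := hsum.hasSum
  have hshift : HasSum (fun j : ℕ => bc m (j+1) * ((j+1:ℕ) * y ^ (j+1-1))) S := by
    have := (hasSum_nat_add_iff' (f := fun j : ℕ => bc m j * (j * y ^ (j-1))) 1).mpr h0
    simpa using this
  have hg : HasSum (fun j : ℕ => bc m j * y ^ j) (∑' j : ℕ, bc m j * y ^ j) :=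
    (binseries_summable' hm hr1 hyr).hasSum
  have h3 : HasSum (fun j : ℕ => bc m j * (j * y ^ j)) (y * S) := by
    have h := h0.mul_left y
    have he : (fun j : ℕ => y * (bc m j * (j * y ^ (j-1))))
        = fun j : ℕ => bc m j * (j * y ^ j) := by
      funext j
      rcases j with _|j
      · simp
      · simp only [Nat.add_sub_cancel]
        push_cast
        rw [pow_succ]
        ring
    rwa [he] at h
  have hshift' : HasSum (fun j : ℕ => m * (bc m j * y ^ j) + bc m j * (j * y ^ j)) S := by
    have he : (fun j : ℕ => bc m (j+1) * ((j+1:ℕ) * y ^ (j+1-1)))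
        = fun j : ℕ => m * (bc m j * y ^ j) + bc m j * (j * y ^ j) := by
      funext j
      simp only [Nat.add_sub_cancel]
      push_cast
      linear_combination y ^ j * bc_succ_mul m j
    rwa [he] at hshift
  have huniq : S = m * (∑' j : ℕ, bc m j * y ^ j) + y * S :=
    hshift'.unique ((hg.mul_left m).add h3)
  linear_combination huniq

lemma binomial_hasSum (hm : 0 < m) {x : ℝ} (hx0 : 0 ≤ x) (hx1 : x < 1) :
    HasSum (fun j : ℕ => bc m j * x ^ j) ((1 - x) ^ (-m)) := by
  set r := (x+1)/2 with hr
  have hr0 : 0 < r := by rw [hr]; linarith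
  have hr1 : r < 1 := by rw [hr]; linarith
  have hxr : x < r := by rw [hr]; linarith
  set g := fun z : ℝ => ∑' j : ℕ, bc m j * z ^ j with hgdef
  set F := fun z : ℝ => (1 - z) ^ m * g z with hFdef
  have hF : ∀ y ∈ Set.Ioo (-r) r, HasDerivAt F 0 y := by
    intro y hy
    have h1y : (0:ℝ) < 1 - y := by
      have := hy.2
      linarith
    have hid : HasDerivAt (fun z : ℝ => 1 - z) (-1) y := by
      simpa using (hasDerivAt_id y).const_sub 1
    have hpow : HasDerivAt (fun z : ℝ => (1 - z) ^ m) (-1 * m * (1-y)^(m-1)) y :=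
      hid.rpow_const (Or.inl h1y.ne')
    have hgd := binseries_hasDerivAt hm hr0 hr1 y hy
    have hprod := hpow.mul hgd
    have hode := binseries_ode hm hr0 hr1 hy
    refine hprod.congr_deriv (Eq.symm ?_)
    have e1 : (1-y)^m = (1-y)^(m-1) * (1-y) := by
      rw [← Real.rpow_add_one h1y.ne' (m-1)]
      norm_num
    rw [e1]
    linear_combination (-((1-y)^(m-1))) * hode
  haveI : IsRCLikeNormedField ℝ := inferInstance
  have key : F x = F 0 := by
    apply Convex.is_const_of_fderivWithin_eq_zero (𝕜 := ℝ) (convex_Ioo (-r) r)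
    · intro y hy
      exact ((hF y hy).differentiableAt).differentiableWithinAt
    · intro y hy
      rw [fderivWithin_of_isOpen isOpen_Ioo hy, (hF y hy).hasFDerivAt.fderiv]
      ext z
      simp
    · exact ⟨by linarith, hxr⟩
    · exact ⟨by linarith, hr0⟩
  have hg0 : g 0 = 1 := by
    rw [hgdef]
    simp only []
    rw [tsum_eq_single 0 (fun j hj => by simp [zero_pow hj])]
    simp [bc_zero]
  have hFx : (1 - x) ^ m * g x = 1 := by
    have hF0 : F 0 = 1 := by
      rw [hFdef]
      simp [hg0]
    calc (1-x)^m * g x = F x := rfl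
    _ = F 0 := key
    _ = 1 := hF0
  have h1x : (0:ℝ) < 1 - x := by linarith
  have hgx : g x = (1 - x) ^ (-m) := by
    rw [Real.rpow_neg h1x.le]
    rw [mul_comm] at hFx
    exact eq_inv_of_mul_eq_one_left hFx
  have hsum : Summable (fun j : ℕ => bc m j * x ^ j) :=
    binseries_summable' hm hr1 (by rw [abs_of_nonneg hx0]; exact hxr.le)
  rw [hsum.hasSum_iff]
  exact hgx


end Binomial

section Appell

variable {a b m n l : ℝ}

/-- coefficient of the regrouped Appell power series -/
noncomputable def dcoef (a b m n l : ℝ) (p : ℕ × ℕ) : ℝ :=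
  ((ascPochhammer ℝ (p.1 + p.2)).eval (l + 1/2) * (ascPochhammer ℝ p.1).eval m *
    (ascPochhammer ℝ p.2).eval n /
    ((ascPochhammer ℝ (p.1 + p.2)).eval (l + 3/2) * p.1.factorial * p.2.factorial)) /
    ((1+a) ^ p.1 * (1+b) ^ p.2) / ((1 + 2*l) * (1+a) ^ m * (1+b) ^ n)

lemma poch_ratio (α : ℝ) (N : ℕ) :
    (ascPochhammer ℝ N).eval α * (α + N) = α * (ascPochhammer ℝ N).eval (α + 1) := by
  rw [← ascPochhammer_succ_eval, poch_succ_left_eval]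

lemma dcoef_pos (ha : 0 < a) (hb : 0 < b) (hm : 0 < m) (hn : 0 < n) (hl : 0 ≤ l)
    (p : ℕ × ℕ) : 0 < dcoef a b m n l p := by
  have h1 : (0:ℝ) < l + 1/2 := by linarith
  have h2 : (0:ℝ) < l + 3/2 := by linarith
  have h3 : (0:ℝ) < 1 + 2*l := by linarith
  unfold dcoef
  have p1 := ascPochhammer_pos (p.1 + p.2) _ h1
  have p2 := ascPochhammer_pos p.1 _ hm
  have p3 := ascPochhammer_pos p.2 _ hn
  have p4 := ascPochhammer_pos (p.1 + p.2) _ h2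
  have p5 : (0:ℝ) < (1+a) ^ m := Real.rpow_pos_of_pos (by linarith) m
  have p6 : (0:ℝ) < (1+b) ^ n := Real.rpow_pos_of_pos (by linarith) n
  have p7 : (0:ℝ) < (p.1.factorial : ℝ) := by positivity
  have p8 : (0:ℝ) < (p.2.factorial : ℝ) := by positivity
  have p9 : (0:ℝ) < (1+a) ^ p.1 := by positivity
  have p10 : (0:ℝ) < (1+b) ^ p.2 := by positivity
  positivity

/-- the key algebraic identity -/
lemma dcoef_mul (ha : 0 < a) (hb : 0 < b) (hm : 0 < m) (hn : 0 < n) (hl : 0 ≤ l)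
    (p : ℕ × ℕ) :
    dcoef a b m n l p * (l + 1/2 + ((p.1 + p.2 : ℕ) : ℝ)) =
      (1/2) * (1+a) ^ (-m) * (1+b) ^ (-n) *
        (bc m p.1 * (1/(1+a)) ^ p.1 * (bc n p.2 * (1/(1+b)) ^ p.2)) := by
  obtain ⟨j, k⟩ := p
  have h1 : (0:ℝ) < l + 1/2 := by linarith
  have h2 : (0:ℝ) < l + 3/2 := by linarith
  have h3 : (0:ℝ) < 1 + 2*l := by linarith
  set P := (ascPochhammer ℝ (j + k)).eval (l + 1/2) with hPdef
  set Q := (ascPochhammer ℝ (j + k)).eval (l + 3/2) with hQdef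
  set Mj := (ascPochhammer ℝ j).eval m with hMdef
  set Nk := (ascPochhammer ℝ k).eval n with hNdef
  have key : P * (l + 1/2 + ((j + k : ℕ) : ℝ)) = (l + 1/2) * Q := by
    have h := poch_ratio (l + 1/2) (j + k)
    rw [show l + 1/2 + 1 = l + 3/2 by ring] at h
    rw [hPdef, hQdef]
    push_cast
    push_cast at h
    linarith [h]
  have hQ : (0:ℝ) < Q := ascPochhammer_pos (j + k) _ h2
  have p5 : (0:ℝ) < (1+a) ^ m := Real.rpow_pos_of_pos (by linarith) m
  have p6 : (0:ℝ) < (1+b) ^ n := Real.rpow_pos_of_pos (by linarith) n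
  have p7 : (0:ℝ) < (j.factorial : ℝ) := by positivity
  have p8 : (0:ℝ) < (k.factorial : ℝ) := by positivity
  have p9 : (0:ℝ) < (1+a) ^ j := by positivity
  have p10 : (0:ℝ) < (1+b) ^ k := by positivity
  have hna : ((1:ℝ)+a) ^ (-m) = ((1+a) ^ m)⁻¹ := Real.rpow_neg (by linarith) m
  have hnb : ((1:ℝ)+b) ^ (-n) = ((1+b) ^ n)⁻¹ := Real.rpow_neg (by linarith) n
  calc dcoef a b m n l (j, k) * (l + 1/2 + ((j + k : ℕ) : ℝ))
      = (P * (l + 1/2 + ((j + k : ℕ) : ℝ))) * Mj * Nk / (Q * j.factorial * k.factorial)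
          / ((1+a) ^ j * (1+b) ^ k) / ((1 + 2*l) * (1+a) ^ m * (1+b) ^ n) := by
        unfold dcoef
        ring
    _ = ((l + 1/2) * Q) * Mj * Nk / (Q * j.factorial * k.factorial)
          / ((1+a) ^ j * (1+b) ^ k) / ((1 + 2*l) * (1+a) ^ m * (1+b) ^ n) := by rw [key]
    _ = (1/2) * (1+a) ^ (-m) * (1+b) ^ (-n) *
        (bc m j * (1/(1+a)) ^ j * (bc n k * (1/(1+b)) ^ k)) := by
        rw [hna, hnb]
        unfold bc
        rw [div_pow, div_pow]
        field_simp
        ring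


lemma summable_dmul (ha : 0 < a) (hb : 0 < b) (hm : 0 < m) (hn : 0 < n) (hl : 0 ≤ l)
    {r : ℝ} (h0 : 0 ≤ r) (h1 : r < 1) :
    Summable (fun p : ℕ × ℕ =>
      dcoef a b m n l p * (l + 1/2 + ((p.1 + p.2 : ℕ) : ℝ)) * r ^ (p.1 + p.2)) := by
  have ha1 : (0:ℝ) < 1 + a := by linarith
  have hb1 : (0:ℝ) < 1 + b := by linarith
  have hxa : r / (1+a) < 1 := by
    rw [div_lt_one ha1]; linarith
  have hxb : r / (1+b) < 1 := by
    rw [div_lt_one hb1]; linarith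
  have hsa := bc_summable hm (by positivity : (0:ℝ) ≤ r / (1+a)) hxa
  have hsb := bc_summable hn (by positivity : (0:ℝ) ≤ r / (1+b)) hxb
  have hprod := (hsa.mul_of_nonneg hsb
    (fun j => by have := bc_pos hm j; positivity)
    (fun k => by have := bc_pos hn k; positivity)).mul_left
    ((1/2) * (1+a) ^ (-m) * (1+b) ^ (-n))
  apply hprod.congr
  intro p
  rw [dcoef_mul ha hb hm hn hl p, div_pow, div_pow, div_pow, div_pow, one_pow, one_pow, pow_add]
  ring

set_option maxHeartbeats 1600000 in
/-- the heart of the matter -/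
lemma main_hasDerivAt (ha : 0 < a) (hb : 0 < b) (hm : 0 < m) (hn : 0 < n) (hl : 0 ≤ l)
    {u : ℝ} (hu0 : 0 < u) (hu1 : u < 1) :
    HasDerivAt (fun v : ℝ =>
        ∑' p : ℕ × ℕ, dcoef a b m n l p * v ^ (l + 1/2 + ((p.1 + p.2 : ℕ) : ℝ)))
      ((1/2) * u ^ (l - 1/2) * (1 - u + a) ^ (-m) * (1 - u + b) ^ (-n)) u := by
  have ha1 : (0:ℝ) < 1 + a := by linarith
  have hb1 : (0:ℝ) < 1 + b := by linarith
  have hα : (0:ℝ) < l + 1/2 := by linarith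
  set ε := u/2 with hε
  set r := (1+u)/2 with hrdef
  have hε0 : 0 < ε := by rw [hε]; linarith
  have hr1 : r < 1 := by rw [hrdef]; linarith
  have hr0 : 0 < r := by rw [hrdef]; linarith
  have hεu : ε < u := by rw [hε]; linarith
  have hur : u < r := by rw [hrdef]; linarith
  set K := ε ^ (l - 1/2) + r ^ (l - 1/2) with hK
  have hKpos : 0 < K := by
    have := Real.rpow_pos_of_pos hε0 (l - 1/2)
    have := Real.rpow_pos_of_pos hr0 (l - 1/2)
    rw [hK]; linarith
  have hbound : ∀ (p : ℕ × ℕ) (v : ℝ), v ∈ Set.Ioo ε r →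
      ‖dcoef a b m n l p * ((l + 1/2 + ((p.1 + p.2 : ℕ) : ℝ)) *
          v ^ (l + 1/2 + ((p.1 + p.2 : ℕ) : ℝ) - 1))‖ ≤
        K * (dcoef a b m n l p * (l + 1/2 + ((p.1 + p.2 : ℕ) : ℝ)) * r ^ (p.1 + p.2)) := by
    intro p v hv
    have hv0 : 0 < v := lt_trans hε0 hv.1
    have hd := dcoef_pos ha hb hm hn hl p
    have hNpos : (0:ℝ) < l + 1/2 + ((p.1 + p.2 : ℕ) : ℝ) := by positivity
    have hvpow : v ^ (l + 1/2 + ((p.1 + p.2 : ℕ) : ℝ) - 1)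
        = v ^ (l - 1/2) * v ^ (p.1 + p.2) := by
      rw [show l + 1/2 + ((p.1 + p.2 : ℕ) : ℝ) - 1 = (l - 1/2) + ((p.1 + p.2 : ℕ) : ℝ) by ring,
        Real.rpow_add hv0, Real.rpow_natCast]
    have h1 : v ^ (l - 1/2) ≤ K := by
      rcases le_or_gt 0 (l - 1/2) with h | h
      · have h1a : v ^ (l - 1/2) ≤ r ^ (l - 1/2) := Real.rpow_le_rpow hv0.le hv.2.le h
        have := Real.rpow_pos_of_pos hε0 (l - 1/2)
        rw [hK]; linarith
      · have h1a : v ^ (l - 1/2) ≤ ε ^ (l - 1/2) :=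
          Real.rpow_le_rpow_of_nonpos hε0 hv.1.le h.le
        have := Real.rpow_pos_of_pos hr0 (l - 1/2)
        rw [hK]; linarith
    have h2 : v ^ (p.1 + p.2) ≤ r ^ (p.1 + p.2) := pow_le_pow_left₀ hv0.le hv.2.le _
    rw [Real.norm_eq_abs, abs_of_pos (by positivity), hvpow]
    have hvl : (0:ℝ) < v ^ (l - 1/2) := Real.rpow_pos_of_pos hv0 _
    have hvn : (0:ℝ) < v ^ (p.1 + p.2) := by positivity
    calc dcoef a b m n l p * ((l + 1/2 + ((p.1 + p.2 : ℕ) : ℝ)) *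
          (v ^ (l - 1/2) * v ^ (p.1 + p.2)))
        ≤ dcoef a b m n l p * ((l + 1/2 + ((p.1 + p.2 : ℕ) : ℝ)) *
          (K * r ^ (p.1 + p.2))) := by
          apply mul_le_mul_of_nonneg_left _ hd.le
          apply mul_le_mul_of_nonneg_left _ hNpos.le
          exact mul_le_mul h1 h2 hvn.le hKpos.le
      _ = K * (dcoef a b m n l p * (l + 1/2 + ((p.1 + p.2 : ℕ) : ℝ)) * r ^ (p.1 + p.2)) := by
          ring
  have hpt : ∀ (p : ℕ × ℕ) (v : ℝ), v ∈ Set.Ioo ε r →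
      HasDerivAt (fun w : ℝ => dcoef a b m n l p * w ^ (l + 1/2 + ((p.1 + p.2 : ℕ) : ℝ)))
        (dcoef a b m n l p * ((l + 1/2 + ((p.1 + p.2 : ℕ) : ℝ)) *
          v ^ (l + 1/2 + ((p.1 + p.2 : ℕ) : ℝ) - 1))) v := by
    intro p v hv
    have hv0 : 0 < v := lt_trans hε0 hv.1
    exact (Real.hasDerivAt_rpow_const (p := l + 1/2 + ((p.1 + p.2 : ℕ) : ℝ))
      (Or.inl hv0.ne')).const_mul (dcoef a b m n l p)
  have hsum_u : Summable (fun p : ℕ × ℕ =>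
      dcoef a b m n l p * u ^ (l + 1/2 + ((p.1 + p.2 : ℕ) : ℝ))) := by
    have hd := fun p => dcoef_pos ha hb hm hn hl p
    apply Summable.of_nonneg_of_le
      (f := fun p : ℕ × ℕ => (u ^ (l + 1/2) / (l + 1/2)) *
        (dcoef a b m n l p * (l + 1/2 + ((p.1 + p.2 : ℕ) : ℝ)) * u ^ (p.1 + p.2)))
      (fun p => by
        have h1 := hd p
        have h2 := Real.rpow_pos_of_pos hu0 (l + 1/2 + ((p.1 + p.2 : ℕ) : ℝ))
        positivity)
      ?_
      (((summable_dmul ha hb hm hn hl hu0.le hu1)).mul_left _)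
    intro p
    show dcoef a b m n l p * u ^ (l + 1/2 + ((p.1 + p.2 : ℕ) : ℝ)) ≤
      u ^ (l + 1/2) / (l + 1/2) *
        (dcoef a b m n l p * (l + 1/2 + ((p.1 + p.2 : ℕ) : ℝ)) * u ^ (p.1 + p.2))
    have hNpos : (0:ℝ) < l + 1/2 + ((p.1 + p.2 : ℕ) : ℝ) := by positivity
    have hupow : u ^ (l + 1/2 + ((p.1 + p.2 : ℕ) : ℝ))
        = u ^ (l + 1/2) * u ^ (p.1 + p.2) := by
      rw [Real.rpow_add hu0, Real.rpow_natCast]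
    rw [hupow]
    have hual : (0:ℝ) < u ^ (l + 1/2) := Real.rpow_pos_of_pos hu0 _
    have hun : (0:ℝ) < u ^ (p.1 + p.2) := by positivity
    have h1 := hd p
    have hNN : (0:ℝ) ≤ ((p.1 + p.2 : ℕ) : ℝ) := Nat.cast_nonneg _
    rw [show u ^ (l + 1/2) / (l + 1/2) *
        (dcoef a b m n l p * (l + 1/2 + ((p.1 + p.2 : ℕ) : ℝ)) * u ^ (p.1 + p.2))
        = (dcoef a b m n l p * (u ^ (l + 1/2) * u ^ (p.1 + p.2))) *
          ((l + 1/2 + ((p.1 + p.2 : ℕ) : ℝ)) / (l + 1/2)) by field_simp]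
    have hfrac : (1:ℝ) ≤ (l + 1/2 + ((p.1 + p.2 : ℕ) : ℝ)) / (l + 1/2) := by
      rw [le_div_iff₀ hα]
      linarith
    exact le_mul_of_one_le_right (by positivity) hfrac
  have hder : HasDerivAt (fun v : ℝ =>
      ∑' p : ℕ × ℕ, dcoef a b m n l p * v ^ (l + 1/2 + ((p.1 + p.2 : ℕ) : ℝ)))
      (∑' p : ℕ × ℕ, dcoef a b m n l p * ((l + 1/2 + ((p.1 + p.2 : ℕ) : ℝ)) *
        u ^ (l + 1/2 + ((p.1 + p.2 : ℕ) : ℝ) - 1))) u :=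
    hasDerivAt_tsum_of_isPreconnected
      ((summable_dmul ha hb hm hn hl hr0.le hr1).mul_left K)
      isOpen_Ioo (convex_Ioo ε r).isPreconnected hpt hbound ⟨hεu, hur⟩ hsum_u ⟨hεu, hur⟩
  -- now compute the value of the derivative series
  have hxa0 : (0:ℝ) ≤ u / (1+a) := by positivity
  have hxa1 : u / (1+a) < 1 := by rw [div_lt_one ha1]; linarith
  have hxb0 : (0:ℝ) ≤ u / (1+b) := by positivity
  have hxb1 : u / (1+b) < 1 := by rw [div_lt_one hb1]; linarith
  have h1 := binomial_hasSum hm hxa0 hxa1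
  have h2 := binomial_hasSum hn hxb0 hxb1
  have hprodsum : Summable (fun p : ℕ × ℕ =>
      (bc m p.1 * (u/(1+a)) ^ p.1) * (bc n p.2 * (u/(1+b)) ^ p.2)) :=
    h1.summable.mul_of_nonneg h2.summable
      (fun j => by have := bc_pos hm j; positivity)
      (fun k => by have := bc_pos hn k; positivity)
  have hmul := (h1.mul h2 hprodsum).mul_left
    ((1/2) * (1+a) ^ (-m) * (1+b) ^ (-n) * u ^ (l - 1/2))
  have h1ua : (0:ℝ) ≤ 1 - u / (1+a) := by linarith
  have h1ub : (0:ℝ) ≤ 1 - u / (1+b) := by linarith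
  have ea : (1+a) ^ (-m) * (1 - u/(1+a)) ^ (-m) = (1-u+a) ^ (-m) := by
    rw [← Real.mul_rpow ha1.le h1ua]
    congr 1
    field_simp
    ring
  have eb : (1+b) ^ (-n) * (1 - u/(1+b)) ^ (-n) = (1-u+b) ^ (-n) := by
    rw [← Real.mul_rpow hb1.le h1ub]
    congr 1
    field_simp
    ring
  have hs2 : HasSum (fun p : ℕ × ℕ => dcoef a b m n l p *
      ((l + 1/2 + ((p.1 + p.2 : ℕ) : ℝ)) * u ^ (l + 1/2 + ((p.1 + p.2 : ℕ) : ℝ) - 1)))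
      ((1/2) * u ^ (l - 1/2) * (1 - u + a) ^ (-m) * (1 - u + b) ^ (-n)) := by
    convert hmul using 1
    · rfl
    · funext p
      have hupow : u ^ (l + 1/2 + ((p.1 + p.2 : ℕ) : ℝ) - 1)
          = u ^ (l - 1/2) * (u ^ p.1 * u ^ p.2) := by
        rw [show l + 1/2 + ((p.1 + p.2 : ℕ) : ℝ) - 1
            = (l - 1/2) + ((p.1 + p.2 : ℕ) : ℝ) by ring,
          Real.rpow_add hu0, Real.rpow_natCast, pow_add]
      rw [hupow, show dcoef a b m n l p *
          ((l + 1/2 + ((p.1 + p.2 : ℕ) : ℝ)) * (u ^ (l - 1/2) * (u ^ p.1 * u ^ p.2)))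
          = dcoef a b m n l p * (l + 1/2 + ((p.1 + p.2 : ℕ) : ℝ)) *
            (u ^ (l - 1/2) * (u ^ p.1 * u ^ p.2)) by ring,
        dcoef_mul ha hb hm hn hl p, div_pow, div_pow, div_pow, div_pow, one_pow, one_pow]
      ring
    · rw [← ea, ← eb]
      ring
  rw [hs2.tsum_eq] at hder
  exact hder
end Appell
end Stmt9Aux

theorem stmt9 (a b m n l : ℝ) (ha : 0 < a) (hb : 0 < b) (hm : 0 < m) (hn : 0 < n)
    (hl : 0 ≤ l) :
    ∀ u ∈ Set.Ioo (0:ℝ) 1,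
      HasDerivAt (fun v : ℝ => v ^ (l + 1/2) / ((1 + 2 * l) * (1 + a) ^ m * (1 + b) ^ n) *
          appellF1 (l + 1/2) m n (l + 3/2) (v / (1 + a)) (v / (1 + b)))
        ((1/2) * u ^ (l - 1/2) * (1 - u + a) ^ (-m) * (1 - u + b) ^ (-n)) u := by
  intro u hu
  obtain ⟨hu0, hu1⟩ := hu
  have hmain := Stmt9Aux.main_hasDerivAt ha hb hm hn hl hu0 hu1
  apply hmain.congr_of_eventuallyEq
  filter_upwards [Ioo_mem_nhds hu0 hu1] with v hv
  obtain ⟨hv0, hv1⟩ := hv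
  unfold appellF1
  rw [← tsum_mul_left]
  apply tsum_congr
  intro p
  have hvpow : v ^ (l + 1/2 + ((p.1 + p.2 : ℕ) : ℝ)) = v ^ (l + 1/2) * (v ^ p.1 * v ^ p.2) := by
    rw [Real.rpow_add hv0, Real.rpow_natCast, pow_add]
  unfold Stmt9Aux.dcoef
  rw [hvpow, div_pow, div_pow]
  ring
end

section
/- For real a > 0 and half-integer m ≥ 1/2, the high-SNR asymptotic holds: (1 + a/sin²θ)^{−m} ≤ (sin²θ/a)^m for all θ ∈ (0, π/2), and moreover a^m · ∫₀^{π/2} (1 + a/sin²θ)^{−m} dθ → ∫₀^{π/2} sin^{2m}θ dθ = (√π/2) Γ(m+1/2)/Γ(m+1) as a → ∞. -/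
/-!
With s = sin² θ, the integrand satisfies a^m (1 + a/s)^(-m) = (s / (1 + s/a))^m, which increases
to s^m as a → ∞, so dominated convergence (with bound s^m) gives the limit. The moment
I(n) = ∫₀^{π/2} sin^n obeys Wallis' recursion I(n+2) = (n+1)/(n+2) · I(n), which the Gamma
expression also satisfies by Γ(x+1) = x Γ(x); the base cases are I(0) = π/2 and I(1) = 1,
using Γ(1/2) = √π.
-/

open Real Filter MeasureTheory Topology Interval

section

variable {m : ℝ}

lemma one_add_rpow_neg_le_inv_rpow (hm : 0 ≤ m) {x : ℝ} (hx : 0 < x) :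
    (1 + x) ^ (-m) ≤ x⁻¹ ^ m := by
  rw [inv_rpow hx.le, ← rpow_neg hx.le]
  exact rpow_le_rpow_of_nonpos hx (by linarith) (by linarith)

lemma rpow_mul_one_add_div_rpow_neg {a s : ℝ} (ha : 0 < a) (hs : 0 < s) :
    a ^ m * (1 + a / s) ^ (-m) = (s / (1 + s / a)) ^ m := by
  rw [rpow_neg (by positivity), ← div_eq_mul_inv, ← div_rpow ha.le (by positivity)]
  congr 1
  field_simp
  ring

lemma rpow_mul_one_add_div_rpow_neg_le (hm : 0 ≤ m) {a s : ℝ} (ha : 0 < a) (hs : 0 < s) :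
    a ^ m * (1 + a / s) ^ (-m) ≤ s ^ m := by
  rw [rpow_mul_one_add_div_rpow_neg ha hs]
  gcongr
  exact div_le_self hs.le (le_add_of_nonneg_right (by positivity))

lemma tendsto_rpow_mul_one_add_div_rpow_neg {s : ℝ} (hs : 0 < s) :
    Tendsto (fun a => a ^ m * (1 + a / s) ^ (-m)) atTop (𝓝 (s ^ m)) := by
  have hlim : Tendsto (fun a => s / (1 + s / a)) atTop (𝓝 s) := by
    have h0 : Tendsto (fun a => s / a) atTop (𝓝 0) := tendsto_const_nhds.div_atTop tendsto_id
    have h1 : Tendsto (fun a => s / (1 + s / a)) atTop (𝓝 (s / (1 + 0))) :=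
      tendsto_const_nhds.div (tendsto_const_nhds.add h0) (by norm_num)
    rwa [add_zero, div_one] at h1
  refine ((continuousAt_rpow_const s m (Or.inl hs.ne')).tendsto.comp hlim).congr' ?_
  filter_upwards [eventually_gt_atTop 0] with a ha
  exact (rpow_mul_one_add_div_rpow_neg ha hs).symm

lemma tendsto_rpow_mul_intervalIntegral_one_add_div_rpow_neg (hm : 0 ≤ m) {s : ℝ → ℝ}
    {b c : ℝ} (hs_meas : Measurable s) (hs_pos : ∀ x ∈ Ι b c, 0 < s x)
    (hs_int : IntervalIntegrable (fun x => s x ^ m) volume b c) :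
    Tendsto (fun a => a ^ m * ∫ x in b..c, (1 + a / s x) ^ (-m)) atTop
      (𝓝 (∫ x in b..c, s x ^ m)) := by
  simp_rw [← intervalIntegral.integral_const_mul]
  refine intervalIntegral.tendsto_integral_filter_of_dominated_convergence _
    (.of_forall fun a => (by fun_prop : Measurable _).aestronglyMeasurable) ?_ hs_int
    (.of_forall fun x hx => tendsto_rpow_mul_one_add_div_rpow_neg (hs_pos x hx))
  filter_upwards [eventually_gt_atTop 0] with a ha
  refine .of_forall fun x hx => ?_
  have hsx := hs_pos x hx
  rw [norm_of_nonneg (by positivity)]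
  exact rpow_mul_one_add_div_rpow_neg_le hm ha hsx

end

lemma integral_sin_pow_add_two_zero_pi_div_two (n : ℕ) :
    ∫ θ in 0..π / 2, sin θ ^ (n + 2) =
      (n + 1 : ℝ) / (n + 2) * ∫ θ in 0..π / 2, sin θ ^ n := by
  simp [integral_sin_pow]

lemma integral_sin_pow_zero_pi_div_two (n : ℕ) :
    ∫ θ in 0..π / 2, sin θ ^ n = √π / 2 * Gamma (n / 2 + 1 / 2) / Gamma (n / 2 + 1) := by
  induction n using Nat.twoStepInduction with
  | zero =>
    simp only [pow_zero, intervalIntegral.integral_const, smul_eq_mul, mul_one, sub_zero,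
      Nat.cast_zero, zero_div, zero_add, Gamma_one, div_one, Gamma_one_half_eq]
    rw [div_mul_eq_mul_div, mul_self_sqrt pi_pos.le]
  | one =>
    have hΓ : Gamma (1 / 2 + 1) = 1 / 2 * √π := by
      rw [Gamma_add_one (by norm_num), Gamma_one_half_eq]
    have hπ : 0 < √π := sqrt_pos.mpr pi_pos
    simp only [pow_one, integral_sin, cos_zero, cos_pi_div_two, Nat.cast_one, add_halves,
      Gamma_one, hΓ]
    field_simp
    norm_num
  | more n ih _ =>
    have hΓ₁ : Gamma ((n + 2 : ℕ) / 2 + 1 / 2) = (n / 2 + 1 / 2) * Gamma (n / 2 + 1 / 2) := by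
      rw [← Gamma_add_one (by positivity)]
      push_cast
      ring_nf
    have hΓ₂ : Gamma ((n + 2 : ℕ) / 2 + 1) = (n / 2 + 1) * Gamma (n / 2 + 1) := by
      rw [← Gamma_add_one (by positivity)]
      push_cast
      ring_nf
    have hpos : 0 < Gamma (n / 2 + 1) := Gamma_pos_of_pos (by positivity)
    rw [integral_sin_pow_add_two_zero_pi_div_two, ih, hΓ₁, hΓ₂]
    field_simp

lemma sin_pos_of_mem_uIoc_zero_pi_div_two {θ : ℝ} (hθ : θ ∈ Ι 0 (π / 2)) : 0 < sin θ := by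
  rw [Set.uIoc_of_le (by positivity)] at hθ
  exact sin_pos_of_pos_of_lt_pi hθ.1 (by linarith [hθ.2, pi_pos])

lemma tendsto_rpow_mul_integral_one_add_div_sin_sq_rpow_neg {m : ℝ} (hm : 0 ≤ m) :
    Tendsto (fun a => a ^ m * ∫ θ in 0..π / 2, (1 + a / sin θ ^ 2) ^ (-m)) atTop
      (𝓝 (∫ θ in 0..π / 2, sin θ ^ (2 * m))) := by
  have hpow : ∫ θ in 0..π / 2, sin θ ^ (2 * m) = ∫ θ in 0..π / 2, (sin θ ^ 2) ^ m := by
    refine intervalIntegral.integral_congr_ae (.of_forall fun θ hθ => ?_)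
    rw [rpow_mul (sin_pos_of_mem_uIoc_zero_pi_div_two hθ).le, rpow_two]
  rw [hpow]
  refine tendsto_rpow_mul_intervalIntegral_one_add_div_rpow_neg hm (by fun_prop)
    (fun θ hθ => pow_pos (sin_pos_of_mem_uIoc_zero_pi_div_two hθ) 2) ?_
  exact ((continuous_sin.pow 2).rpow_const fun _ => Or.inr hm).intervalIntegrable _ _

theorem stmt16_general (m : ℝ) (hhalf : ∃ k : ℕ, 2 * m = (k : ℝ) + 1) :
    (∀ a : ℝ, 0 < a → ∀ θ ∈ Set.Ioo (0:ℝ) (Real.pi/2),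
        (1 + a / Real.sin θ ^ 2) ^ (-m) ≤ (Real.sin θ ^ 2 / a) ^ m) ∧
    Tendsto (fun a : ℝ => a ^ m * ∫ θ in (0:ℝ)..(Real.pi/2), (1 + a / Real.sin θ ^ 2) ^ (-m))
      atTop (nhds (∫ θ in (0:ℝ)..(Real.pi/2), Real.sin θ ^ (2 * m))) ∧
    ∫ θ in (0:ℝ)..(Real.pi/2), Real.sin θ ^ (2 * m)
      = (Real.sqrt Real.pi / 2) * Real.Gamma (m + 1/2) / Real.Gamma (m + 1) := by
  obtain ⟨k, hk⟩ := hhalf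
  have hm : 0 ≤ m := by linarith [k.cast_nonneg (α := ℝ)]
  refine ⟨fun a ha θ hθ => ?_, tendsto_rpow_mul_integral_one_add_div_sin_sq_rpow_neg hm, ?_⟩
  · have hs : 0 < sin θ := sin_pos_of_pos_of_lt_pi hθ.1 (by linarith [hθ.2, pi_pos])
    exact (one_add_rpow_neg_le_inv_rpow hm (x := a / sin θ ^ 2) (by positivity)).trans_eq
      (by rw [inv_div])
  · have hpow (θ : ℝ) : sin θ ^ (2 * m) = sin θ ^ (k + 1) := by
      rw [hk, ← Nat.cast_succ, rpow_natCast]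
    simp_rw [hpow, integral_sin_pow_zero_pi_div_two]
    rw [show ((k + 1 : ℕ) : ℝ) / 2 = m by push_cast; linarith]

theorem stmt16 (m : ℝ) (hm : 1/2 ≤ m) (hhalf : ∃ k : ℕ, 2 * m = (k : ℝ) + 1) :
    (∀ a : ℝ, 0 < a → ∀ θ ∈ Set.Ioo (0:ℝ) (Real.pi/2),
        (1 + a / Real.sin θ ^ 2) ^ (-m) ≤ (Real.sin θ ^ 2 / a) ^ m) ∧
    Tendsto (fun a : ℝ => a ^ m * ∫ θ in (0:ℝ)..(Real.pi/2), (1 + a / Real.sin θ ^ 2) ^ (-m))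
      atTop (nhds (∫ θ in (0:ℝ)..(Real.pi/2), Real.sin θ ^ (2 * m))) ∧
    ∫ θ in (0:ℝ)..(Real.pi/2), Real.sin θ ^ (2 * m)
      = (Real.sqrt Real.pi / 2) * Real.Gamma (m + 1/2) / Real.Gamma (m + 1) :=
  stmt16_general m hhalf
end
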